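/- Let $V_\bullet = \bigoplus_{n\ge 0} V_n$ be a graded algebra with a multiplicative decreasing $\mathbb{R}$-filtration $\{V_\bullet^t\}$ (i.e. $V_{n_1}^{t_1} \cdot V_{n_2}^{t_2} \subseteq V_{n_1+n_2}^{t_1+t_2}$), and let $\nu$ be a valuation-like map on $V_\bullet \setminus \{0\}$ to $\mathbb{Z}^r$ with $\nu(s_1 s_2) = \nu(s_1)+\nu(s_2)$. Then the concave transform $G(x) = \sup\{t : x \in \Delta_\nu(V_\bullet^t)\}$, where $\Delta_\nu(W_\bullet)$ is the closed convex hull closure of $\bigcup_n \frac{1}{n}\nu(W_n \setminus \{0\})$, is a concave function on the interior of $\Delta_\nu(V_\bullet)$. -/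

import Mathlib

/-!
Let `Γ(t)` be the set of normalized values `ν(a)/n` of nonzero `a ∈ V_n^{nt}`. If `ν(a)/n ∈ Γ(t)`,
`ν(b)/m ∈ Γ(s)` and `p, q > 0`, then `a^{pm} b^{qn}` lies in degree `(p+q)mn` and filtration level
`pmnt + qmns`, and its normalized value is `(p/(p+q))·ν(a)/n + (q/(p+q))·ν(b)/m`. So `Γ` is
concave for rational weights; passing to closures, any real weight `λ` is approximated by rational
ones, which gives `λx + (1-λ)y ∈ Δ(V_•^{t'})` for every `t' < λt + (1-λ)s`. Taking suprema yields
`λ G(x) + (1-λ) G(y) ≤ G(λx + (1-λ)y)`; the constant filtration gives convexity of `Δ(V_•)`.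
-/

open Set Topology

section NormalizedValues

variable {A ι : Type*} [MonoidWithZero A]

def normalizedValues (S : ℕ → Set A) (ν : A → ι → ℤ) : Set (ι → ℝ) :=
  {x | ∃ n : ℕ, 0 < n ∧ ∃ a ∈ S n, a ≠ 0 ∧ x = (n : ℝ)⁻¹ • fun i => (ν a i : ℝ)}

variable {F : ℕ → ℝ → Set A} {ν : A → ι → ℤ}

lemma normalizedValues_antitone (hanti : ∀ n, Antitone (F n)) {t t' : ℝ} (h : t' ≤ t) :
    normalizedValues (fun n => F n (n * t)) ν ⊆ normalizedValues (fun n => F n (n * t')) ν := by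
  rintro x ⟨n, hn, a, ha, ha0, rfl⟩
  exact ⟨n, hn, a, hanti n (by gcongr) ha, ha0, rfl⟩

lemma pow_mem_of_mul_mem
    (hmul : ∀ n₁ n₂ : ℕ, ∀ t₁ t₂ : ℝ, ∀ a ∈ F n₁ t₁, ∀ b ∈ F n₂ t₂, a * b ∈ F (n₁ + n₂) (t₁ + t₂))
    {n k : ℕ} {t : ℝ} {a : A} (hk : 0 < k) (ha : a ∈ F n t) :
    a ^ k ∈ F (k * n) (k * t) := by
  induction k, hk using Nat.le_induction with
  | base => simpa using ha
  | succ k _ ih =>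
    rw [pow_succ, add_mul, one_mul, Nat.cast_succ, add_mul, one_mul]
    exact hmul _ _ _ _ _ ih _ ha

variable [NoZeroDivisors A]

lemma map_pow_of_map_mul (hν : ∀ a b : A, a ≠ 0 → b ≠ 0 → ν (a * b) = ν a + ν b)
    {a : A} (ha : a ≠ 0) (k : ℕ) : ν (a ^ k) = k • ν a := by
  have : Nontrivial A := ⟨⟨a, 0, ha⟩⟩
  induction k with
  | zero =>
    simpa using hν 1 1 one_ne_zero one_ne_zero
  | succ k ih =>
    rw [pow_succ, hν _ _ (pow_ne_zero k ha) ha, ih, succ_nsmul]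

lemma div_add_smul_mem_normalizedValues
    (hmul : ∀ n₁ n₂ : ℕ, ∀ t₁ t₂ : ℝ, ∀ a ∈ F n₁ t₁, ∀ b ∈ F n₂ t₂, a * b ∈ F (n₁ + n₂) (t₁ + t₂))
    (hν : ∀ a b : A, a ≠ 0 → b ≠ 0 → ν (a * b) = ν a + ν b)
    {p q : ℕ} (hp : 0 < p) (hq : 0 < q) {t s : ℝ} {x y : ι → ℝ}
    (hx : x ∈ normalizedValues (fun n => F n (n * t)) ν)
    (hy : y ∈ normalizedValues (fun n => F n (n * s)) ν) :
    ((p : ℝ) / (p + q)) • x + ((q : ℝ) / (p + q)) • y ∈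
      normalizedValues (fun n => F n (n * ((p / (p + q)) * t + (q / (p + q)) * s))) ν := by
  obtain ⟨n, hn, a, ha, ha0, rfl⟩ := hx
  obtain ⟨m, hm, b, hb, hb0, rfl⟩ := hy
  have hpq : (p : ℝ) + q ≠ 0 := by positivity
  refine ⟨p * m * n + q * n * m, by positivity, a ^ (p * m) * b ^ (q * n), ?_,
    mul_ne_zero (pow_ne_zero _ ha0) (pow_ne_zero _ hb0), ?_⟩
  · convert hmul _ _ _ _ _ (pow_mem_of_mul_mem hmul (k := p * m) (by positivity) ha) _
      (pow_mem_of_mul_mem hmul (k := q * n) (by positivity) hb) using 2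
    push_cast
    field_simp
  · funext i
    simp only [hν _ _ (pow_ne_zero _ ha0) (pow_ne_zero _ hb0), map_pow_of_map_mul hν ha0,
      map_pow_of_map_mul hν hb0, Pi.add_apply, Pi.smul_apply, smul_eq_mul, nsmul_eq_mul,
      Pi.mul_apply, Pi.natCast_apply]
    push_cast
    field_simp

lemma Rat.exists_cast_eq_div_add {r : ℚ} (h0 : 0 < r) (h1 : r < 1) :
    ∃ p q : ℕ, 0 < p ∧ 0 < q ∧ (r : ℝ) = p / (p + q) := by
  have hpos : 0 < r.num := Rat.num_pos.2 h0
  have hnum : (r.num.toNat : ℤ) = r.num := Int.toNat_of_nonneg hpos.le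
  have hlt : r.num < r.den := Rat.num_lt_denom_iff.2 h1
  refine ⟨r.num.toNat, r.den - r.num.toNat, by omega, by omega, ?_⟩
  rw [Nat.cast_sub (by omega), add_sub_cancel, Rat.cast_def]
  congr 1
  exact_mod_cast hnum.symm

lemma mem_closure_Ioo_inter_range_ratCast {V : Set ℝ} (hV : IsOpen V) {a : ℝ}
    (ha : a ∈ V ∩ Icc 0 1) : a ∈ closure (V ∩ Ioo 0 1 ∩ range ((↑) : ℚ → ℝ)) := by
  rw [← closure_Ioo zero_ne_one] at ha
  exact closure_minimal (Rat.denseRange_cast.open_subset_closure_inter (hV.inter isOpen_Ioo))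
    isClosed_closure (hV.inter_closure ha)

lemma add_smul_mem_closure_normalizedValues (hanti : ∀ n, Antitone (F n))
    (hmul : ∀ n₁ n₂ : ℕ, ∀ t₁ t₂ : ℝ, ∀ a ∈ F n₁ t₁, ∀ b ∈ F n₂ t₂, a * b ∈ F (n₁ + n₂) (t₁ + t₂))
    (hν : ∀ a b : A, a ≠ 0 → b ≠ 0 → ν (a * b) = ν a + ν b)
    {a b t s t' : ℝ} {x y : ι → ℝ} (ha : 0 ≤ a) (hb : 0 ≤ b) (hab : a + b = 1)
    (hx : x ∈ closure (normalizedValues (fun n => F n (n * t)) ν))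
    (hy : y ∈ closure (normalizedValues (fun n => F n (n * s)) ν))
    (ht' : t' < a * t + b * s) :
    a • x + b • y ∈ closure (normalizedValues (fun n => F n (n * t')) ν) := by
  have hb' : 1 - a = b := by linarith
  set Λ := {l : ℝ | t' < l * t + (1 - l) * s} ∩ Ioo 0 1 ∩ range ((↑) : ℚ → ℝ)
  set f : ℝ × (ι → ℝ) × (ι → ℝ) → ι → ℝ := fun z => z.1 • z.2.1 + (1 - z.1) • z.2.2
  have hf : Continuous f := by fun_prop
  have hΛ : a ∈ closure Λ := by
    refine mem_closure_Ioo_inter_range_ratCast ?_ ⟨by rwa [mem_ofPred_eq, hb'], ha, ?_⟩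
    · exact isOpen_lt continuous_const (by fun_prop)
    · linarith
  have hfΛ : f '' (Λ ×ˢ normalizedValues (fun n => F n (n * t)) ν ×ˢ
      normalizedValues (fun n => F n (n * s)) ν) ⊆ normalizedValues (fun n => F n (n * t')) ν := by
    rintro _ ⟨⟨l, u, v⟩, ⟨⟨⟨hlt, hl0, hl1⟩, r, rfl⟩, hu, hv⟩, rfl⟩
    simp only [f, mem_ofPred_eq] at hlt hl0 hl1 ⊢
    obtain ⟨p, q, hp, hq, hr⟩ := Rat.exists_cast_eq_div_add (mod_cast hl0) (mod_cast hl1)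
    have hq' : 1 - (r : ℝ) = q / (p + q) := by
      rw [hr]
      field_simp
      ring
    rw [hq', hr] at hlt ⊢
    exact normalizedValues_antitone hanti hlt.le
      (div_add_smul_mem_normalizedValues hmul hν hp hq hu hv)
  have hmem : (a, x, y) ∈ closure (Λ ×ˢ normalizedValues (fun n => F n (n * t)) ν ×ˢ
      normalizedValues (fun n => F n (n * s)) ν) := by
    simp only [closure_prod_eq]
    exact ⟨hΛ, hx, hy⟩
  have := closure_mono hfΛ (image_closure_subset_closure_image hf ⟨_, hmem, rfl⟩)
  rwa [show f (a, x, y) = a • x + b • y by simp only [f, hb']] at this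

lemma convex_closure_normalizedValues {S : ℕ → Set A}
    (hS : ∀ m n : ℕ, ∀ a ∈ S m, ∀ b ∈ S n, a * b ∈ S (m + n))
    (hν : ∀ a b : A, a ≠ 0 → b ≠ 0 → ν (a * b) = ν a + ν b) :
    Convex ℝ (closure (normalizedValues S ν)) := by
  intro x hx y hy a b ha hb hab
  exact add_smul_mem_closure_normalizedValues (F := fun n _ => S n) (fun _ _ _ _ => le_rfl)
    (fun m n _ _ a ha b hb => hS m n a ha b hb) hν ha hb hab (t := 0) (s := 0) hx hy (t' := -1)
    (by simp)

end NormalizedValues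

lemma mul_csSup_add_mul_csSup_le {X Y Z : Set ℝ} {a b : ℝ} (ha : 0 ≤ a) (hb : 0 ≤ b)
    (hX : BddAbove X) (hX' : X.Nonempty) (hY : BddAbove Y) (hY' : Y.Nonempty) (hZ : BddAbove Z)
    (h : ∀ t ∈ X, ∀ s ∈ Y, ∀ u < a * t + b * s, u ∈ Z) :
    a * sSup X + b * sSup Y ≤ sSup Z := by
  rw [← smul_eq_mul, ← smul_eq_mul, ← Real.sSup_smul_of_nonneg ha, ← Real.sSup_smul_of_nonneg hb,
    ← csSup_add hX'.smul_set (hX.smul_of_nonneg ha) hY'.smul_set (hY.smul_of_nonneg hb)]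
  refine csSup_le (hX'.smul_set.add hY'.smul_set) ?_
  rintro _ ⟨_, ⟨t, ht, rfl⟩, _, ⟨s, hs, rfl⟩, rfl⟩
  exact le_of_forall_lt_imp_le_of_dense fun u hu => le_csSup hZ (h t ht s hs u hu)

theorem stmt_8_general {k A : Type*} [Field k] [CommRing A] [IsDomain A] [Algebra k A]
    (r : ℕ) (𝒜 : ℕ → Submodule k A)
    (h𝒜mul : ∀ m n : ℕ, ∀ a ∈ 𝒜 m, ∀ b ∈ 𝒜 n, a * b ∈ 𝒜 (m + n))
    (F : ℕ → ℝ → Submodule k A)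
    (hanti : ∀ n, Antitone (F n))
    (hmul : ∀ n₁ n₂ : ℕ, ∀ t₁ t₂ : ℝ, ∀ a ∈ F n₁ t₁, ∀ b ∈ F n₂ t₂,
      a * b ∈ F (n₁ + n₂) (t₁ + t₂))
    (ν : A → Fin r → ℤ)
    (hν : ∀ a b : A, a ≠ 0 → b ≠ 0 → ν (a * b) = ν a + ν b)
    (Δ : (ℕ → Submodule k A) → Set (Fin r → ℝ))
    (hΔ : ∀ S : ℕ → Submodule k A, Δ S = closure {x : Fin r → ℝ | ∃ n : ℕ, 0 < n ∧
      ∃ a ∈ S n, a ≠ 0 ∧ x = (n : ℝ)⁻¹ • fun i => (ν a i : ℝ)})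
    (G : (Fin r → ℝ) → ℝ)
    (hG : ∀ x, G x = sSup {t : ℝ | x ∈ Δ fun n => F n (n * t)})
    (hbdd : ∀ x ∈ interior (Δ 𝒜),
      BddAbove {t : ℝ | x ∈ Δ fun n => F n (n * t)} ∧
      {t : ℝ | x ∈ Δ fun n => F n (n * t)}.Nonempty) :
    ConcaveOn ℝ (interior (Δ 𝒜)) G := by
  have hΔF : ∀ t, Δ (fun n => F n (n * t)) =
      closure (normalizedValues (fun n => (F n (n * t) : Set A)) ν) := fun t => hΔ _
  have hconv : Convex ℝ (Δ 𝒜) := by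
    rw [hΔ]
    exact convex_closure_normalizedValues (S := fun n => (𝒜 n : Set A)) h𝒜mul hν
  refine ⟨hconv.interior, fun x hx y hy a b ha hb hab => ?_⟩
  obtain ⟨hbx, hnx⟩ := hbdd x hx
  obtain ⟨hby, hny⟩ := hbdd y hy
  simp only [hG, smul_eq_mul]
  refine mul_csSup_add_mul_csSup_le ha hb hbx hnx hby hny
    (hbdd _ (hconv.interior hx hy ha hb hab)).1 fun t ht s hs t' ht' => ?_
  simp only [mem_ofPred_eq, hΔF] at ht hs ⊢
  exact add_smul_mem_closure_normalizedValues (F := fun n t => (F n t : Set A))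
    (fun n _ _ h => SetLike.coe_mono (hanti n h)) hmul hν ha hb hab ht hs ht'

theorem stmt_8 {k A : Type*} [Field k] [CommRing A] [IsDomain A] [Algebra k A]
    (r : ℕ) (𝒜 : ℕ → Submodule k A)
    (h𝒜mul : ∀ m n : ℕ, ∀ a ∈ 𝒜 m, ∀ b ∈ 𝒜 n, a * b ∈ 𝒜 (m + n))
    (F : ℕ → ℝ → Submodule k A)
    (hF𝒜 : ∀ n t, F n t ≤ 𝒜 n)
    (hanti : ∀ n, Antitone (F n))
    (hmul : ∀ n₁ n₂ : ℕ, ∀ t₁ t₂ : ℝ, ∀ a ∈ F n₁ t₁, ∀ b ∈ F n₂ t₂,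
      a * b ∈ F (n₁ + n₂) (t₁ + t₂))
    (ν : A → Fin r → ℤ)
    (hν : ∀ a b : A, a ≠ 0 → b ≠ 0 → ν (a * b) = ν a + ν b)
    (Δ : (ℕ → Submodule k A) → Set (Fin r → ℝ))
    (hΔ : ∀ S : ℕ → Submodule k A, Δ S = closure {x : Fin r → ℝ | ∃ n : ℕ, 0 < n ∧
      ∃ a ∈ S n, a ≠ 0 ∧ x = (n : ℝ)⁻¹ • fun i => (ν a i : ℝ)})
    (G : (Fin r → ℝ) → ℝ)
    (hG : ∀ x, G x = sSup {t : ℝ | x ∈ Δ fun n => F n (n * t)})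
    (hbdd : ∀ x ∈ interior (Δ 𝒜),
      BddAbove {t : ℝ | x ∈ Δ fun n => F n (n * t)} ∧
      {t : ℝ | x ∈ Δ fun n => F n (n * t)}.Nonempty) :
    ConcaveOn ℝ (interior (Δ 𝒜)) G :=
  stmt_8_general r 𝒜 h𝒜mul F hanti hmul ν hν Δ hΔ G hG hbdd
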